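/- (Proposition 3 of the paper.) Let f and f̂ be nonnegative Lebesgue-integrable functions on [−π, π], and for each n ≥ 1 let Rₙ(f) denote the n×n Hermitian Toeplitz matrix whose (j,k) entry is c_{j−k}(f) := (1/2π)∫_{−π}^{π} f(θ) e^{−i(j−k)θ} dθ. Then lim_{n→∞} δ_T(Rₙ(f), Rₙ(f̂)) = (1/2π)∫_{−π}^{π} |f(θ) − f̂(θ)| dθ, where δ_T(M₁, M₂) := min{ q₀ + q̂₀ : Q, Q̂ positive semidefinite Hermitian Toeplitz n×n matrices with constant diagonal entries q₀, q̂₀, satisfying M₁ + Q = M₂ + Q̂ }. -/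

import Mathlib

open Matrix MeasureTheory Set
open scoped ComplexOrder

/-- A matrix is Toeplitz if its `(j,k)` entry depends only on `j - k`. -/
def IsToeplitz {n : ℕ} {α : Type*} (M : Matrix (Fin n) (Fin n) α) : Prop :=
  ∀ i j i' j' : Fin n, (i : ℤ) - (j : ℤ) = (i' : ℤ) - (j' : ℤ) → M i j = M i' j'

/-- The `n×n` Hermitian Toeplitz matrix of Fourier coefficients of `f`:
its `(j,k)` entry is `c_{j-k}(f) = (1/2π) ∫_{-π}^{π} f(θ) e^{-i(j-k)θ} dθ`. -/
noncomputable def fourierToeplitz (n : ℕ) (f : ℝ → ℝ) : Matrix (Fin n) (Fin n) ℂ :=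
  Matrix.of fun j k =>
    (1 / (2 * (Real.pi : ℂ))) *
      ∫ θ in Icc (-Real.pi) Real.pi,
        (f θ : ℂ) * Complex.exp (-Complex.I * (((j : ℤ) - (k : ℤ) : ℤ) : ℂ) * (θ : ℂ))

/-- The Toeplitz-constrained covariance distance: the minimal combined diagonal
`q₀ + q̂₀` of positive semidefinite Hermitian Toeplitz perturbations `Q, Q̂`
with `M₁ + Q = M₂ + Q̂`.  (Matrices of size `n + 1`, so `n ≥ 1` sizes are
exactly those occurring.) -/
noncomputable def deltaT (n : ℕ) (M₁ M₂ : Matrix (Fin (n + 1)) (Fin (n + 1)) ℂ) : ℝ :=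
  sInf {x : ℝ | ∃ Q Qhat : Matrix (Fin (n + 1)) (Fin (n + 1)) ℂ,
    Q.PosSemidef ∧ IsToeplitz Q ∧ Qhat.PosSemidef ∧ IsToeplitz Qhat ∧
    M₁ + Q = M₂ + Qhat ∧
    x = (Q 0 0 + Qhat 0 0).re}

namespace DTP

noncomputable section
open Complex Filter

abbrev Ic : Set ℝ := Icc (-Real.pi) Real.pi

def eC (m : ℤ) (θ : ℝ) : ℂ := Complex.exp (Complex.I * m * θ)

lemma eC_add (a b : ℤ) (θ : ℝ) : eC (a + b) θ = eC a θ * eC b θ := by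
  rw [eC, eC, eC, ← Complex.exp_add]
  push_cast
  ring_nf

lemma eC_sub (a b : ℤ) (θ : ℝ) : eC (a - b) θ = eC a θ * eC (-b) θ := by
  rw [sub_eq_add_neg, eC_add]

lemma eC_conj (m : ℤ) (θ : ℝ) : (starRingEnd ℂ) (eC m θ) = eC (-m) θ := by
  rw [eC, eC, ← Complex.exp_conj]
  congr 1
  simp [Complex.conj_I]

lemma eC_norm (m : ℤ) (θ : ℝ) : ‖eC m θ‖ = 1 := by
  rw [eC, Complex.norm_exp]
  have : (Complex.I * m * θ).re = 0 := by simp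
  rw [this, Real.exp_zero]

lemma eC_zero (θ : ℝ) : eC 0 θ = 1 := by simp [eC]

lemma eC_continuous (m : ℤ) : Continuous (fun θ => eC m θ) := by
  apply Complex.continuous_exp.comp
  continuity

lemma eC_integrableOn (m : ℤ) : IntegrableOn (fun θ => eC m θ) Ic := by
  exact ((eC_continuous m).continuousOn).integrableOn_compact isCompact_Icc

lemma integral_eC (m : ℤ) :
    (∫ θ in Ic, eC m θ) = if m = 0 then (2 * Real.pi : ℂ) else 0 := by
  have hle : -Real.pi ≤ Real.pi := by linarith [Real.pi_pos]
  rcases eq_or_ne m 0 with h | h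
  · subst h
    simp only [if_pos rfl]
    simp only [eC_zero]
    rw [setIntegral_const]
    rw [measureReal_def, Real.volume_Icc]
    rw [ENNReal.toReal_ofReal (by linarith [Real.pi_pos])]
    rw [real_smul]
    push_cast
    ring
  · rw [if_neg h]
    have hc : (Complex.I * m) ≠ 0 := by
      simp [Complex.I_ne_zero, Complex.ext_iff]
      exact_mod_cast h
    have : (∫ θ in Ic, eC m θ) = ∫ θ in (-Real.pi)..Real.pi, Complex.exp ((Complex.I * m) * θ) := by
      rw [intervalIntegral.integral_of_le hle, integral_Icc_eq_integral_Ioc]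
      rfl
    rw [this, integral_exp_mul_complex hc]
    have : Complex.exp (Complex.I * m * Real.pi) = Complex.exp (Complex.I * m * (-Real.pi : ℝ)) := by
      rw [Complex.exp_eq_exp_iff_exists_int]
      refine ⟨m, ?_⟩
      push_cast
      ring
    rw [this, sub_self, zero_div]

def fc (h : ℝ → ℂ) (m : ℤ) : ℂ := (1 / (2 * (Real.pi : ℂ))) * ∫ θ in Ic, h θ * eC (-m) θ

lemma cpi : (1 / (2 * (Real.pi : ℂ))) = ((1 / (2 * Real.pi) : ℝ) : ℂ) := by push_cast; ring

lemma two_pi_C_ne : (2 * (Real.pi : ℂ)) ≠ 0 := by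
  simp [Complex.ext_iff, Real.pi_ne_zero]

lemma integrable_mul_eC {h : ℝ → ℂ} (hh : IntegrableOn h Ic) (m : ℤ) :
    IntegrableOn (fun θ => h θ * eC m θ) Ic := by
  have := Integrable.bdd_mul hh ((eC_continuous m).aestronglyMeasurable)
    (Filter.Eventually.of_forall fun x => le_of_eq (eC_norm m x))
  exact this.congr (Filter.Eventually.of_forall fun x => mul_comm _ _)

lemma fourierToeplitz_apply (n : ℕ) (f : ℝ → ℝ) (j k : Fin n) :
    fourierToeplitz n f j k = fc (fun θ => (f θ : ℂ)) ((j : ℤ) - (k : ℤ)) := by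
  rw [fourierToeplitz, Matrix.of_apply, fc]
  congr 1
  refine setIntegral_congr_fun measurableSet_Icc fun θ _ => ?_
  congr 1
  rw [eC]
  congr 1
  push_cast
  ring

lemma isToeplitz_fourierToeplitz (n : ℕ) (f : ℝ → ℝ) : IsToeplitz (fourierToeplitz n f) := by
  intro i j i' j' h
  rw [fourierToeplitz_apply, fourierToeplitz_apply, h]

lemma fc_eC (p m : ℤ) : fc (eC p) m = if m = p then 1 else 0 := by
  have : (fun θ => eC p θ * eC (-m) θ) = fun θ => eC (p - m) θ := by
    funext θ; rw [eC_sub]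
  rw [fc]
  rw [show (∫ θ in Ic, eC p θ * eC (-m) θ) = ∫ θ in Ic, eC (p - m) θ by rw [this]]
  rw [integral_eC]
  rcases eq_or_ne m p with h | h
  · subst h
    rw [if_pos rfl, if_pos (sub_self m), one_div, inv_mul_cancel₀ two_pi_C_ne]
  · rw [if_neg h, if_neg (by omega : p - m ≠ 0), mul_zero]

lemma quadform_fourierToeplitz {n : ℕ} {h : ℝ → ℝ} (hh : IntegrableOn h Ic) (x : Fin n → ℂ) :
    star x ⬝ᵥ (fourierToeplitz n h) *ᵥ x
      = (1 / (2 * (Real.pi : ℂ))) *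
        ∫ t in Ic, (h t : ℂ) * (Complex.normSq (∑ k : Fin n, x k * eC (k : ℤ) t) : ℂ) := by
  classical
  have hhC : IntegrableOn (fun θ => (h θ : ℂ)) Ic := hh.ofReal
  have hInt : ∀ (j k : Fin n), IntegrableOn
      (fun t => (starRingEnd ℂ) (x j) * x k * ((h t : ℂ) * eC (-((j:ℤ) - (k:ℤ))) t)) Ic :=
    fun j k => ((integrable_mul_eC hhC _).const_mul _)
  have expand : star x ⬝ᵥ (fourierToeplitz n h) *ᵥ x
      = ∑ j : Fin n, ∑ k : Fin n,
          (starRingEnd ℂ) (x j) * x k * fc (fun t => (h t : ℂ)) ((j:ℤ) - (k:ℤ)) := by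
    simp only [dotProduct, mulVec, Pi.star_apply, RCLike.star_def, Finset.mul_sum]
    exact Finset.sum_congr rfl fun j _ => Finset.sum_congr rfl fun k _ => by
      rw [fourierToeplitz_apply]; ring
  rw [expand]
  have step : ∀ j k : Fin n, (starRingEnd ℂ) (x j) * x k * fc (fun t => (h t:ℂ)) ((j:ℤ)-(k:ℤ))
      = (1/(2*(Real.pi:ℂ))) *
        ∫ t in Ic, (starRingEnd ℂ) (x j) * x k * ((h t:ℂ) * eC (-((j:ℤ)-(k:ℤ))) t) := by
    intro j k
    rw [fc, MeasureTheory.integral_const_mul]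
    ring
  simp_rw [step, ← Finset.mul_sum]
  congr 1
  have merge : ∀ j : Fin n,
      (∑ k : Fin n, ∫ t in Ic, (starRingEnd ℂ) (x j) * x k * ((h t:ℂ) * eC (-((j:ℤ)-(k:ℤ))) t))
      = ∫ t in Ic, ∑ k : Fin n, (starRingEnd ℂ) (x j) * x k * ((h t:ℂ) * eC (-((j:ℤ)-(k:ℤ))) t) :=
    fun j => (integral_finset_sum _ (fun k _ => hInt j k)).symm
  rw [Finset.sum_congr rfl fun j _ => merge j,
    ← integral_finset_sum _ (fun j _ => integrable_finset_sum _ (fun k _ => hInt j k))]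
  refine setIntegral_congr_fun measurableSet_Icc fun t _ => ?_
  have conjS : (starRingEnd ℂ) (∑ k : Fin n, x k * eC (k:ℤ) t)
      = ∑ j : Fin n, (starRingEnd ℂ) (x j) * eC (-(j:ℤ)) t := by
    rw [map_sum]
    exact Finset.sum_congr rfl fun j _ => by rw [(starRingEnd ℂ).map_mul, eC_conj]
  rw [Complex.normSq_eq_conj_mul_self, conjS, Finset.sum_mul_sum, Finset.mul_sum]
  refine Finset.sum_congr rfl fun j _ => ?_
  rw [Finset.mul_sum]
  refine Finset.sum_congr rfl fun k _ => ?_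
  rw [show (-((j:ℤ) - (k:ℤ))) = -(j:ℤ) + (k:ℤ) by ring, eC_add]
  ring

lemma posSemidef_fourierToeplitz {n : ℕ} {h : ℝ → ℝ} (hh : IntegrableOn h Ic)
    (h0 : ∀ θ ∈ Ic, 0 ≤ h θ) : (fourierToeplitz n h).PosSemidef := by
  refine posSemidef_iff_dotProduct_mulVec.mpr ⟨?_, ?_⟩
  · show _ = _
    ext j k
    rw [conjTranspose_apply, fourierToeplitz_apply, fourierToeplitz_apply, fc, fc]
    rw [RCLike.star_def, _root_.map_mul, ← integral_conj]
    congr 1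
    · rw [cpi, Complex.conj_ofReal]
    · refine setIntegral_congr_fun measurableSet_Icc fun θ _ => ?_
      rw [(starRingEnd ℂ).map_mul, eC_conj, Complex.conj_ofReal]
      congr 2
      omega
  · intro x
    rw [quadform_fourierToeplitz hh x]
    have : (∫ t in Ic, (h t : ℂ) * (Complex.normSq (∑ k : Fin n, x k * eC (k : ℤ) t) : ℂ))
        = ((∫ t in Ic, h t * Complex.normSq (∑ k : Fin n, x k * eC (k : ℤ) t) : ℝ) : ℂ) := by
      have e1 : ∀ t : ℝ, (h t : ℂ) * (Complex.normSq (∑ k : Fin n, x k * eC (k : ℤ) t) : ℂ)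
          = ((h t * Complex.normSq (∑ k : Fin n, x k * eC (k : ℤ) t) : ℝ) : ℂ) := fun t => by
        push_cast; ring
      simp_rw [e1]
      exact integral_ofReal
    rw [this, show (1 / (2 * (Real.pi : ℂ))) = ((1 / (2 * Real.pi) : ℝ) : ℂ) by push_cast; ring,
      ← Complex.ofReal_mul]
    rw [Complex.zero_le_real]
    refine mul_nonneg (by positivity) ?_
    refine setIntegral_nonneg measurableSet_Icc fun t ht => ?_
    exact mul_nonneg (h0 t ht) (Complex.normSq_nonneg _)

lemma fourierToeplitz_sub_eq {n : ℕ} {f g : ℝ → ℝ} (hf' : IntegrableOn f Ic)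
    (hg' : IntegrableOn g Ic) :
    fourierToeplitz n f = fourierToeplitz n g + fourierToeplitz n (fun θ => f θ - g θ) := by
  ext j k
  have hfg : IntegrableOn (fun θ => ((f θ - g θ : ℝ) : ℂ) * eC (-((j:ℤ)-(k:ℤ))) θ) Ic := by
    have h1 : IntegrableOn (fun θ => f θ - g θ) Ic := hf'.sub hg'
    exact integrable_mul_eC h1.ofReal _
  have hg2 : IntegrableOn (fun θ => ((g θ : ℝ) : ℂ) * eC (-((j:ℤ)-(k:ℤ))) θ) Ic :=
    integrable_mul_eC hg'.ofReal _
  rw [Matrix.add_apply, fourierToeplitz_apply, fourierToeplitz_apply, fourierToeplitz_apply,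
    fc, fc, fc, ← mul_add]
  beta_reduce
  rw [← integral_add hg2 hfg]
  congr 1
  refine setIntegral_congr_fun measurableSet_Icc fun θ _ => ?_
  push_cast; ring
def qform {n : ℕ} (A : Matrix (Fin n) (Fin n) ℂ) (θ : ℝ) : ℂ :=
  ∑ j : Fin n, ∑ k : Fin n, A j k * eC ((j:ℤ) - (k:ℤ)) θ

def uvec (n : ℕ) (θ : ℝ) : Fin n → ℂ := fun j => eC (-(j:ℤ)) θ

lemma qform_eq_quad {n : ℕ} (A : Matrix (Fin n) (Fin n) ℂ) (θ : ℝ) :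
    qform A θ = star (uvec n θ) ⬝ᵥ A *ᵥ uvec n θ := by
  simp only [qform, uvec, dotProduct, mulVec, Pi.star_apply, RCLike.star_def, Finset.mul_sum]
  refine Finset.sum_congr rfl fun j _ => Finset.sum_congr rfl fun k _ => ?_
  rw [eC_conj, neg_neg, eC_sub]
  ring

lemma qform_continuous {n : ℕ} (A : Matrix (Fin n) (Fin n) ℂ) : Continuous (qform A) := by
  apply continuous_finset_sum
  intro j _
  apply continuous_finset_sum
  intro k _
  exact continuous_const.mul (eC_continuous _)

lemma qform_integrableOn {n : ℕ} (A : Matrix (Fin n) (Fin n) ℂ) : IntegrableOn (qform A) Ic :=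
  (qform_continuous A).continuousOn.integrableOn_compact isCompact_Icc

lemma qform_re_integrableOn {n : ℕ} (A : Matrix (Fin n) (Fin n) ℂ) :
    IntegrableOn (fun θ => (qform A θ).re) Ic :=
  ((Complex.continuous_re.comp (qform_continuous A)).continuousOn).integrableOn_compact
    isCompact_Icc

lemma qform_add {n : ℕ} (A B : Matrix (Fin n) (Fin n) ℂ) (θ : ℝ) :
    qform (A + B) θ = qform A θ + qform B θ := by
  simp [qform, add_mul, Finset.sum_add_distrib]

lemma integral_qform {n : ℕ} (A : Matrix (Fin n) (Fin n) ℂ) :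
    (∫ θ in Ic, qform A θ) = (2 * Real.pi : ℂ) * ∑ j : Fin n, A j j := by
  have hint : ∀ (j k : Fin n), IntegrableOn (fun θ => A j k * eC ((j:ℤ) - (k:ℤ)) θ) Ic :=
    fun j k => (eC_integrableOn _).const_mul _
  rw [show (∫ θ in Ic, qform A θ)
      = ∑ j : Fin n, ∑ k : Fin n, ∫ θ in Ic, A j k * eC ((j:ℤ) - (k:ℤ)) θ by
    simp only [qform]
    rw [integral_finset_sum _ (fun j _ => integrable_finset_sum _ (fun k _ => hint j k))]
    exact Finset.sum_congr rfl fun j _ => integral_finset_sum _ (fun k _ => hint j k)]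
  have key : ∀ j k : Fin n, (∫ θ in Ic, A j k * eC ((j:ℤ) - (k:ℤ)) θ)
      = if k = j then (2*Real.pi:ℂ) * A j k else 0 := by
    intro j k
    rw [MeasureTheory.integral_const_mul, integral_eC]
    by_cases h : k = j
    · subst h; rw [if_pos (sub_self _), if_pos rfl]; ring
    · rw [if_neg, if_neg h, mul_zero]
      intro hc
      exact h (Fin.ext (by omega))
  simp_rw [key]
  rw [Finset.mul_sum]
  refine Finset.sum_congr rfl fun j _ => ?_
  rw [Finset.sum_ite_eq' Finset.univ j (fun k => (2*Real.pi:ℂ) * A j k),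
    if_pos (Finset.mem_univ _)]

lemma qform_nonneg_re {n : ℕ} {Q : Matrix (Fin n) (Fin n) ℂ} (hQ : Q.PosSemidef) (θ : ℝ) :
    0 ≤ (qform Q θ).re := by
  have := (posSemidef_iff_dotProduct_mulVec.mp hQ).2 (uvec n θ)
  rw [← qform_eq_quad] at this
  exact (Complex.le_def.mp this).1

lemma integral_qform_re {n : ℕ} {Q : Matrix (Fin (n+1)) (Fin (n+1)) ℂ} (hQT : IsToeplitz Q) :
    (∫ θ in Ic, (qform Q θ).re) = 2 * Real.pi * (n+1) * (Q 0 0).re := by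
  have hre : (∫ θ in Ic, (qform Q θ).re) = (∫ θ in Ic, qform Q θ).re := by
    simpa using integral_re (qform_integrableOn Q)
  rw [hre, integral_qform]
  have hdiag : ∀ j : Fin (n+1), Q j j = Q 0 0 := fun j => hQT j j 0 0 (by ring)
  rw [Finset.sum_congr rfl fun j _ => hdiag j, Finset.sum_const, Finset.card_univ,
    Fintype.card_fin, nsmul_eq_mul]
  rw [show (2 * Real.pi : ℂ) * ((n+1 : ℕ) * Q 0 0) = ((2 * Real.pi * (n+1) : ℝ) : ℂ) * Q 0 0 by
    push_cast; ring]
  rw [Complex.re_ofReal_mul]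

def Fej (n : ℕ) (h : ℝ → ℂ) (θ : ℝ) : ℂ :=
  (1/((n:ℂ)+1)) * ∑ j : Fin (n+1), ∑ k : Fin (n+1), fc h ((j:ℤ) - (k:ℤ)) * eC ((j:ℤ) - (k:ℤ)) θ

lemma Fej_real (n : ℕ) (g : ℝ → ℝ) (θ : ℝ) :
    Fej n (fun t => (g t : ℂ)) θ = (1/((n:ℂ)+1)) * qform (fourierToeplitz (n+1) g) θ := by
  rw [Fej, qform]
  congr 1
  exact Finset.sum_congr rfl fun j _ => Finset.sum_congr rfl fun k _ => by
    rw [fourierToeplitz_apply]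

lemma fourierToeplitz_zero_re {n : ℕ} (h : ℝ → ℝ) :
    (fourierToeplitz (n+1) h 0 0).re = (1/(2*Real.pi)) * ∫ θ in Ic, h θ := by
  rw [fourierToeplitz_apply, fc]
  rw [show ((0 : Fin (n+1)) : ℤ) - ((0 : Fin (n+1)) : ℤ) = 0 from sub_self _]
  simp_rw [neg_zero, eC_zero, mul_one]
  have : (∫ θ in Ic, ((h θ : ℝ) : ℂ)) = ((∫ θ in Ic, h θ : ℝ) : ℂ) := integral_ofReal
  rw [this, cpi, ← Complex.ofReal_mul, Complex.ofReal_re]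

lemma upper_mem {f fhat : ℝ → ℝ} (hf : IntegrableOn f Ic) (hfhat : IntegrableOn fhat Ic)
    (n : ℕ) :
    ∃ Q Qhat : Matrix (Fin (n+1)) (Fin (n+1)) ℂ,
      Q.PosSemidef ∧ IsToeplitz Q ∧ Qhat.PosSemidef ∧ IsToeplitz Qhat ∧
      fourierToeplitz (n+1) f + Q = fourierToeplitz (n+1) fhat + Qhat ∧
      (1/(2*Real.pi)) * (∫ θ in Ic, |f θ - fhat θ|) = (Q 0 0 + Qhat 0 0).re := by
  set gm : ℝ → ℝ := fun θ => max (fhat θ - f θ) 0 with hgm_def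
  set gp : ℝ → ℝ := fun θ => max (f θ - fhat θ) 0 with hgp_def
  have hgm : IntegrableOn gm Ic := (hfhat.sub hf).pos_part
  have hgp : IntegrableOn gp Ic := (hf.sub hfhat).pos_part
  refine ⟨fourierToeplitz (n+1) gm, fourierToeplitz (n+1) gp,
    posSemidef_fourierToeplitz hgm (fun θ _ => le_max_right _ _),
    isToeplitz_fourierToeplitz _ _,
    posSemidef_fourierToeplitz hgp (fun θ _ => le_max_right _ _),
    isToeplitz_fourierToeplitz _ _, ?_, ?_⟩
  · have hadd : ∀ (a b : ℝ → ℝ), IntegrableOn a Ic → IntegrableOn b Ic →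
        fourierToeplitz (n+1) (fun θ => a θ + b θ) = fourierToeplitz (n+1) a
          + fourierToeplitz (n+1) b := by
      intro a b ha hb
      have := fourierToeplitz_sub_eq (n := n+1) (f := fun θ => a θ + b θ) (g := a)
        (ha.add hb) ha
      rw [this]
      congr 1
      ext j k
      rw [fourierToeplitz_apply, fourierToeplitz_apply]
      simp
    rw [← hadd f gm hf hgm, ← hadd fhat gp hfhat hgp]
    have hfun : (fun θ => f θ + gm θ) = fun θ => fhat θ + gp θ := by
      funext θ
      simp only [hgm_def, hgp_def]
      rcases le_total (f θ) (fhat θ) with h | h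
      · have e1 : max (fhat θ - f θ) 0 = fhat θ - f θ := max_eq_left (by linarith)
        have e2 : max (f θ - fhat θ) 0 = 0 := max_eq_right (by linarith)
        rw [e1, e2]; ring
      · have e1 : max (fhat θ - f θ) 0 = 0 := max_eq_right (by linarith)
        have e2 : max (f θ - fhat θ) 0 = f θ - fhat θ := max_eq_left (by linarith)
        rw [e1, e2]; ring
    rw [hfun]
  · rw [Complex.add_re, fourierToeplitz_zero_re, fourierToeplitz_zero_re]
    rw [← mul_add, ← integral_add hgm hgp]
    congr 1
    refine setIntegral_congr_fun measurableSet_Icc fun θ _ => ?_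
    simp only [hgm_def, hgp_def]
    rcases le_total (f θ) (fhat θ) with h | h
    · have e1 : max (fhat θ - f θ) 0 = fhat θ - f θ := max_eq_left (by linarith)
      have e2 : max (f θ - fhat θ) 0 = 0 := max_eq_right (by linarith)
      rw [_root_.abs_of_nonpos (by linarith), e1, e2]; ring
    · have e1 : max (fhat θ - f θ) 0 = 0 := max_eq_right (by linarith)
      have e2 : max (f θ - fhat θ) 0 = f θ - fhat θ := max_eq_left (by linarith)
      rw [_root_.abs_of_nonneg (by linarith), e1, e2]; ring

lemma lower_le {f fhat : ℝ → ℝ} (hf : IntegrableOn f Ic) (hfhat : IntegrableOn fhat Ic)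
    (n : ℕ) {Q Qhat : Matrix (Fin (n+1)) (Fin (n+1)) ℂ}
    (hQ : Q.PosSemidef) (hQT : IsToeplitz Q) (hQh : Qhat.PosSemidef) (hQhT : IsToeplitz Qhat)
    (heq : fourierToeplitz (n+1) f + Q = fourierToeplitz (n+1) fhat + Qhat) :
    (1/(2*Real.pi)) * (∫ θ in Ic, |(Fej n (fun t => ((f t - fhat t : ℝ) : ℂ)) θ).re|)
      ≤ (Q 0 0 + Qhat 0 0).re := by
  set M : Matrix (Fin (n+1)) (Fin (n+1)) ℂ := fourierToeplitz (n+1) (fun t => f t - fhat t)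
    with hM_def
  have hM : fourierToeplitz (n+1) f = fourierToeplitz (n+1) fhat + M :=
    fourierToeplitz_sub_eq hf hfhat
  have h2 : M + Q = Qhat := by
    rw [hM, add_assoc] at heq
    exact add_left_cancel heq
  have hMT : IsToeplitz M := isToeplitz_fourierToeplitz _ _
  -- pointwise bound
  have hptw : ∀ θ : ℝ, |(qform M θ).re| ≤ (qform Q θ).re + (qform Qhat θ).re := by
    intro θ
    have ha := qform_nonneg_re hQ θ
    have hb := qform_nonneg_re hQh θ
    have hsum : (qform Qhat θ).re = (qform M θ).re + (qform Q θ).re := by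
      rw [← h2, qform_add, Complex.add_re]
    rw [abs_le]
    constructor <;> linarith
  -- integral bound
  have hIb : (∫ θ in Ic, |(qform M θ).re|)
      ≤ 2 * Real.pi * (n+1) * ((Q 0 0 + Qhat 0 0).re) := by
    have hle : (∫ θ in Ic, |(qform M θ).re|)
        ≤ ∫ θ in Ic, ((qform Q θ).re + (qform Qhat θ).re) := by
      refine integral_mono ?_ ((qform_re_integrableOn Q).add (qform_re_integrableOn Qhat))
        fun θ => hptw θ
      exact ((Complex.continuous_re.comp (qform_continuous M)).abs.continuousOn).integrableOn_compact
        isCompact_Icc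
    rw [integral_add (qform_re_integrableOn Q) (qform_re_integrableOn Qhat),
      integral_qform_re hQT, integral_qform_re hQhT] at hle
    rw [Complex.add_re]
    linarith
  -- convert Fej to qform
  have hFej : ∀ θ : ℝ, |(Fej n (fun t => ((f t - fhat t : ℝ) : ℂ)) θ).re|
      = (1/((n:ℝ)+1)) * |(qform M θ).re| := by
    intro θ
    rw [Fej_real n (fun t => f t - fhat t) θ]
    rw [show (1/((n:ℂ)+1)) = ((1/((n:ℝ)+1) : ℝ) : ℂ) by push_cast; ring]
    rw [Complex.re_ofReal_mul, abs_mul, _root_.abs_of_nonneg (by positivity : (0:ℝ) ≤ 1/((n:ℝ)+1)), ← hM_def]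
  simp_rw [hFej]
  rw [MeasureTheory.integral_const_mul]
  have hpos : (0:ℝ) < 2 * Real.pi := by positivity
  have hn1 : (0:ℝ) < (n:ℝ) + 1 := by positivity
  calc (1/(2*Real.pi)) * ((1/((n:ℝ)+1)) * ∫ θ in Ic, |(qform M θ).re|)
      ≤ (1/(2*Real.pi)) * ((1/((n:ℝ)+1)) * (2 * Real.pi * (n+1) * ((Q 0 0 + Qhat 0 0).re))) := by
        have h1 : (0:ℝ) ≤ 1/(2*Real.pi) := by positivity
        have h2' : (0:ℝ) ≤ 1/((n:ℝ)+1) := by positivity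
        exact mul_le_mul_of_nonneg_left (mul_le_mul_of_nonneg_left hIb h2') h1
    _ = (Q 0 0 + Qhat 0 0).re := by
        field_simp
def Dn (n : ℕ) (x : ℝ) : ℂ := ∑ j : Fin (n+1), eC (j:ℤ) x

lemma eC_shift (m : ℤ) (θ t : ℝ) : eC m (θ - t) = eC m θ * eC (-m) t := by
  rw [eC, eC, eC, ← Complex.exp_add]
  congr 1
  push_cast
  ring

lemma Dn_normSq (n : ℕ) (x : ℝ) :
    ((Complex.normSq (Dn n x) : ℝ) : ℂ)
      = ∑ j : Fin (n+1), ∑ k : Fin (n+1), eC ((j:ℤ)-(k:ℤ)) x := by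
  rw [← Complex.mul_conj, Dn, map_sum, Finset.sum_mul_sum]
  refine Finset.sum_congr rfl fun j _ => Finset.sum_congr rfl fun k _ => ?_
  rw [eC_conj, eC_sub]

lemma Dn_normSq_le (n : ℕ) (x : ℝ) : Complex.normSq (Dn n x) ≤ ((n:ℝ)+1)^2 := by
  have h1 : ‖Dn n x‖ ≤ ((n:ℝ)+1) := by
    rw [Dn]
    refine le_trans (norm_sum_le _ _) ?_
    simp_rw [eC_norm]
    simp
  have h0 : (0:ℝ) ≤ ‖Dn n x‖ := norm_nonneg _
  rw [Complex.normSq_eq_norm_sq]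
  nlinarith

lemma K_continuous (n : ℕ) : Continuous (fun x => Complex.normSq (Dn n x)) := by
  apply Complex.continuous_normSq.comp
  apply continuous_finset_sum
  intro j _
  exact eC_continuous _

lemma Fej_kernel {h : ℝ → ℂ} (hh : IntegrableOn h Ic) (n : ℕ) (θ : ℝ) :
    Fej n h θ = (1/((n:ℂ)+1)) * ((1 / (2 * (Real.pi : ℂ))) *
      ∫ t in Ic, h t * ((Complex.normSq (Dn n (θ - t)) : ℝ) : ℂ)) := by
  rw [Fej]
  congr 1
  have hint : ∀ m : ℤ, IntegrableOn (fun t => h t * eC m (θ - t)) Ic := by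
    intro m
    have : IntegrableOn (fun t => h t * eC (-m) t * eC m θ) Ic :=
      (integrable_mul_eC hh (-m)).mul_const _
    refine this.congr_fun (fun t _ => ?_) measurableSet_Icc
    rw [eC_shift]; ring
  have step : ∀ m : ℤ, fc h m * eC m θ
      = (1/(2*(Real.pi:ℂ))) * ∫ t in Ic, h t * eC m (θ - t) := by
    intro m
    rw [fc, mul_assoc, mul_comm (∫ θ in Ic, h θ * eC (-m) θ) (eC m θ),
      ← MeasureTheory.integral_const_mul]
    congr 1
    refine setIntegral_congr_fun measurableSet_Icc fun t _ => ?_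
    rw [eC_shift]; ring
  simp_rw [step, ← Finset.mul_sum]
  congr 1
  have merge : ∀ j : Fin (n+1),
      (∑ k : Fin (n+1), ∫ t in Ic, h t * eC ((j:ℤ)-(k:ℤ)) (θ - t))
      = ∫ t in Ic, ∑ k : Fin (n+1), h t * eC ((j:ℤ)-(k:ℤ)) (θ - t) :=
    fun j => (integral_finset_sum _ (fun k _ => hint _)).symm
  rw [Finset.sum_congr rfl fun j _ => merge j,
    ← integral_finset_sum _ (fun j _ => integrable_finset_sum _ (fun k _ => hint _))]
  refine setIntegral_congr_fun measurableSet_Icc fun t _ => ?_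
  rw [Dn_normSq, Finset.mul_sum]
  refine Finset.sum_congr rfl fun j _ => ?_
  rw [Finset.mul_sum]

lemma integral_K (n : ℕ) (t : ℝ) :
    (∫ θ in Ic, Complex.normSq (Dn n (θ - t))) = 2*Real.pi*((n:ℝ)+1) := by
  have hC : (∫ θ in Ic, ((Complex.normSq (Dn n (θ - t)) : ℝ) : ℂ))
      = ((∫ θ in Ic, Complex.normSq (Dn n (θ - t)) : ℝ) : ℂ) := integral_ofReal
  have hint : ∀ m : ℤ, IntegrableOn (fun θ => eC m θ * eC (-m) t) Ic :=
    fun m => (eC_integrableOn m).mul_const _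
  have key : (∫ θ in Ic, ((Complex.normSq (Dn n (θ - t)) : ℝ) : ℂ))
      = ((n:ℂ)+1) * (2*Real.pi:ℂ) := by
    have e1 : ∀ θ : ℝ, ((Complex.normSq (Dn n (θ - t)) : ℝ) : ℂ)
        = ∑ j : Fin (n+1), ∑ k : Fin (n+1), eC ((j:ℤ)-(k:ℤ)) θ * eC (-((j:ℤ)-(k:ℤ))) t := by
      intro θ
      rw [Dn_normSq]
      exact Finset.sum_congr rfl fun j _ => Finset.sum_congr rfl fun k _ => eC_shift _ _ _
    simp_rw [e1]
    rw [integral_finset_sum _ (fun j _ => integrable_finset_sum _ (fun k _ => hint _))]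
    have merge : ∀ j : Fin (n+1),
        (∫ θ in Ic, ∑ k : Fin (n+1), eC ((j:ℤ)-(k:ℤ)) θ * eC (-((j:ℤ)-(k:ℤ))) t)
        = ∑ k : Fin (n+1), ∫ θ in Ic, eC ((j:ℤ)-(k:ℤ)) θ * eC (-((j:ℤ)-(k:ℤ))) t :=
      fun j => integral_finset_sum _ (fun k _ => hint _)
    rw [Finset.sum_congr rfl fun j _ => merge j]
    have key2 : ∀ j k : Fin (n+1), (∫ θ in Ic, eC ((j:ℤ)-(k:ℤ)) θ * eC (-((j:ℤ)-(k:ℤ))) t)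
        = if k = j then (2*Real.pi:ℂ) else 0 := by
      intro j k
      rw [MeasureTheory.integral_mul_const, integral_eC]
      by_cases hjk : k = j
      · subst hjk
        rw [if_pos (sub_self _), if_pos rfl, show -((k:ℤ) - (k:ℤ)) = 0 by ring, eC_zero,
          mul_one]
      · rw [if_neg, if_neg hjk, zero_mul]
        intro hc
        exact hjk (Fin.ext (by omega))
    simp_rw [key2]
    rw [Finset.sum_congr rfl (fun j _ => Finset.sum_ite_eq' Finset.univ j
      (fun _ => (2*Real.pi:ℂ)))]
    simp [Finset.sum_const]
  rw [hC] at key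
  have key2 : (∫ θ in Ic, Complex.normSq (Dn n (θ - t))) = ((n:ℝ)+1) * (2*Real.pi) := by
    exact_mod_cast key
  rw [key2]; ring

lemma Fej_continuous (n : ℕ) (h : ℝ → ℂ) : Continuous (Fej n h) := by
  apply Continuous.mul continuous_const
  apply continuous_finset_sum
  intro j _
  apply continuous_finset_sum
  intro k _
  exact continuous_const.mul (eC_continuous _)

lemma Fej_contraction {h : ℝ → ℂ} (hh : IntegrableOn h Ic) (n : ℕ) :
    (∫ θ in Ic, ‖Fej n h θ‖) ≤ ∫ t in Ic, ‖h t‖ := by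
  classical
  set K : ℝ → ℝ := fun x => Complex.normSq (Dn n x) with hK_def
  have hK0 : ∀ x, 0 ≤ K x := fun x => Complex.normSq_nonneg _
  have hKb : ∀ x, K x ≤ ((n:ℝ)+1)^2 := fun x => Dn_normSq_le n x
  set c₀ : ℝ := 1/(2*Real.pi*((n:ℝ)+1)) with hc₀_def
  have hc₀ : 0 ≤ c₀ := by positivity
  -- pointwise bound
  have hptw : ∀ θ : ℝ, ‖Fej n h θ‖ ≤ c₀ * ∫ t in Ic, ‖h t‖ * K (θ - t) := by
    intro θ
    rw [Fej_kernel hh n θ, ← mul_assoc]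
    rw [show (1/((n:ℂ)+1)) * (1 / (2 * (Real.pi : ℂ))) = ((c₀ : ℝ) : ℂ) by
      rw [hc₀_def]; push_cast; field_simp; try ring]
    rw [norm_mul, Complex.norm_real, Real.norm_eq_abs, _root_.abs_of_nonneg hc₀]
    refine mul_le_mul_of_nonneg_left ?_ hc₀
    refine le_trans (norm_integral_le_integral_norm _) ?_
    refine le_of_eq (setIntegral_congr_fun measurableSet_Icc fun t _ => ?_)
    rw [norm_mul, Complex.norm_real, Real.norm_eq_abs, _root_.abs_of_nonneg (hK0 _)]
  -- product integrability
  have hA : Integrable (fun z : ℝ × ℝ => ‖h z.2‖)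
      ((volume.restrict Ic).prod (volume.restrict Ic)) := by
    have := (integrable_const (1:ℝ) (μ := volume.restrict Ic)).mul_prod hh.norm
    simpa using this
  have hP : Integrable (Function.uncurry fun θ t => ‖h t‖ * K (θ - t))
      ((volume.restrict Ic).prod (volume.restrict Ic)) := by
    have hm : AEStronglyMeasurable (Function.uncurry fun θ t => ‖h t‖ * K (θ - t))
        ((volume.restrict Ic).prod (volume.restrict Ic)) := by
      apply AEStronglyMeasurable.mul hA.aestronglyMeasurable
      exact ((K_continuous n).comp (continuous_fst.sub continuous_snd)).aestronglyMeasurable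
    refine Integrable.mono' (hA.const_mul (((n:ℝ)+1)^2)) hm ?_
    refine Filter.Eventually.of_forall fun z => ?_
    have h1 : 0 ≤ ‖h z.2‖ := norm_nonneg _
    rw [Function.uncurry, Real.norm_eq_abs, _root_.abs_of_nonneg (mul_nonneg h1 (hK0 _))]
    calc ‖h z.2‖ * K (z.1 - z.2) ≤ ‖h z.2‖ * (((n:ℝ)+1)^2) :=
          mul_le_mul_of_nonneg_left (hKb _) h1
      _ = ((n:ℝ)+1)^2 * ‖h z.2‖ := by ring
  -- main estimate
  have hFejInt : IntegrableOn (fun θ => ‖Fej n h θ‖) Ic :=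
    ((Fej_continuous n h).norm.continuousOn).integrableOn_compact isCompact_Icc
  have hRHSInt : IntegrableOn (fun θ => c₀ * ∫ t in Ic, ‖h t‖ * K (θ - t)) Ic :=
    (hP.integral_prod_left).const_mul c₀
  have h1 : (∫ θ in Ic, ‖Fej n h θ‖) ≤ ∫ θ in Ic, c₀ * ∫ t in Ic, ‖h t‖ * K (θ - t) :=
    integral_mono hFejInt hRHSInt hptw
  rw [MeasureTheory.integral_const_mul] at h1
  rw [MeasureTheory.integral_integral_swap hP] at h1
  have h2 : ∀ t : ℝ, (∫ θ in Ic, ‖h t‖ * K (θ - t)) = ‖h t‖ * (2*Real.pi*((n:ℝ)+1)) := by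
    intro t
    rw [MeasureTheory.integral_const_mul, integral_K]
  simp_rw [h2] at h1
  rw [MeasureTheory.integral_mul_const] at h1
  calc (∫ θ in Ic, ‖Fej n h θ‖) ≤ c₀ * ((∫ t in Ic, ‖h t‖) * (2*Real.pi*((n:ℝ)+1))) := h1
    _ = ∫ t in Ic, ‖h t‖ := by
        rw [hc₀_def]
        have hpi : Real.pi ≠ 0 := Real.pi_ne_zero
        field_simp
        try ring
def Nnp (n : ℕ) (p : ℤ) : ℕ :=
  (Finset.univ.filter (fun jk : Fin (n+1) × Fin (n+1) => ((jk.1 : ℤ) - (jk.2 : ℤ) = p))).card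

lemma Fej_eC (n : ℕ) (p : ℤ) (θ : ℝ) :
    Fej n (eC p) θ = (((Nnp n p : ℕ) : ℂ)/((n:ℂ)+1)) * eC p θ := by
  classical
  rw [Fej]
  have step : ∀ j k : Fin (n+1), fc (eC p) ((j:ℤ)-(k:ℤ)) * eC ((j:ℤ)-(k:ℤ)) θ
      = if ((j:ℤ)-(k:ℤ) = p) then eC p θ else 0 := by
    intro j k
    rw [fc_eC]
    by_cases hc : (j:ℤ)-(k:ℤ) = p
    · rw [if_pos hc, if_pos hc, hc, one_mul]
    · rw [if_neg hc, if_neg hc, zero_mul]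
  simp_rw [step]
  rw [← Finset.sum_product']
  rw [show ((Finset.univ : Finset (Fin (n+1))) ×ˢ (Finset.univ : Finset (Fin (n+1))))
      = (Finset.univ : Finset (Fin (n+1) × Fin (n+1))) from Finset.univ_product_univ]
  rw [← Finset.sum_filter, Finset.sum_const, Nnp, nsmul_eq_mul]
  ring

lemma Nnp_eq (n : ℕ) (p : ℤ) (hp : p.natAbs ≤ n) : Nnp n p = n + 1 - p.natAbs := by
  classical
  have hcard : Nnp n p = (Finset.Icc (p.toNat) (n - (-p).toNat)).card := by
    apply Finset.card_bij (fun jk _ => ((jk.1 : Fin (n+1)) : ℕ))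
    · intro a ha
      simp only [Nnp, Finset.mem_filter, Finset.mem_univ, true_and] at ha
      simp only [Finset.mem_Icc]
      have h1 := a.1.isLt
      have h2 := a.2.isLt
      omega
    · intro a ha b hb hab
      simp only [Nnp, Finset.mem_filter, Finset.mem_univ, true_and] at ha hb
      have e1 : a.1 = b.1 := Fin.ext hab
      have e2 : a.2 = b.2 := Fin.ext (by omega)
      exact Prod.ext e1 e2
    · intro m hm
      simp only [Finset.mem_Icc] at hm
      refine ⟨(⟨m, by omega⟩, ⟨((m:ℤ) - p).toNat, by omega⟩), ?_, rfl⟩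
      simp only [Nnp, Finset.mem_filter, Finset.mem_univ, true_and, Fin.val_mk]
      omega
  rw [hcard, Nat.card_Icc]
  omega

lemma Nnp_tendsto (p : ℤ) :
    Filter.Tendsto (fun n : ℕ => ((Nnp n p : ℝ))/((n:ℝ)+1)) atTop (nhds 1) := by
  have h2 : Filter.Tendsto (fun n : ℕ => (p.natAbs : ℝ) * (1/((n:ℝ)+1))) atTop (nhds 0) := by
    simpa using tendsto_one_div_add_atTop_nhds_zero_nat.const_mul (p.natAbs : ℝ)
  have h1 : Filter.Tendsto (fun n : ℕ => 1 - (p.natAbs : ℝ) * (1/((n:ℝ)+1))) atTop (nhds 1) := by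
    simpa using (tendsto_const_nhds (x := (1:ℝ)) (f := atTop)).sub h2
  refine h1.congr' ?_
  filter_upwards [Filter.eventually_ge_atTop p.natAbs] with n hn
  rw [Nnp_eq n p hn]
  have hcast : ((n + 1 - p.natAbs : ℕ) : ℝ) = (n:ℝ) + 1 - (p.natAbs:ℝ) := by
    have : p.natAbs ≤ n + 1 := by omega
    push_cast [Nat.cast_sub this]
    ring
  rw [hcast]
  have hne : ((n:ℝ)+1) ≠ 0 := by positivity
  field_simp

lemma Fej_eC_tendsto (p : ℤ) :
    Filter.Tendsto (fun n : ℕ => ∫ θ in Ic, ‖Fej n (eC p) θ - eC p θ‖) atTop (nhds 0) := by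
  have hval : ∀ n : ℕ, (∫ θ in Ic, ‖Fej n (eC p) θ - eC p θ‖)
      = |((Nnp n p : ℝ))/((n:ℝ)+1) - 1| * (2*Real.pi) := by
    intro n
    have hpt : ∀ θ : ℝ, ‖Fej n (eC p) θ - eC p θ‖
        = |((Nnp n p : ℝ))/((n:ℝ)+1) - 1| := by
      intro θ
      rw [Fej_eC, ← sub_one_mul, norm_mul, eC_norm, mul_one]
      rw [show ((Nnp n p : ℂ))/((n:ℂ)+1) - 1
          = (((Nnp n p : ℝ)/((n:ℝ)+1) - 1 : ℝ) : ℂ) by push_cast; ring]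
      rw [Complex.norm_real, Real.norm_eq_abs]
    simp_rw [hpt]
    rw [setIntegral_const, measureReal_def, Real.volume_Icc,
      ENNReal.toReal_ofReal (by linarith [Real.pi_pos]), smul_eq_mul]
    ring
  simp_rw [hval]
  have habs := ((Nnp_tendsto p).sub (tendsto_const_nhds (x := (1:ℝ)))).abs
  have := habs.mul_const (2*Real.pi)
  simpa using this

lemma fc_add {h g : ℝ → ℂ} (hh : IntegrableOn h Ic) (hg : IntegrableOn g Ic) (m : ℤ) :
    fc (fun t => h t + g t) m = fc h m + fc g m := by
  rw [fc, fc, fc, ← mul_add, ← integral_add (integrable_mul_eC hh _) (integrable_mul_eC hg _)]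
  congr 1
  refine setIntegral_congr_fun measurableSet_Icc fun θ _ => ?_
  ring

lemma fc_sub {h g : ℝ → ℂ} (hh : IntegrableOn h Ic) (hg : IntegrableOn g Ic) (m : ℤ) :
    fc (fun t => h t - g t) m = fc h m - fc g m := by
  rw [fc, fc, fc, ← mul_sub, ← integral_sub (integrable_mul_eC hh _) (integrable_mul_eC hg _)]
  congr 1
  refine setIntegral_congr_fun measurableSet_Icc fun θ _ => ?_
  ring

lemma fc_smul (a : ℂ) (h : ℝ → ℂ) (m : ℤ) : fc (fun t => a * h t) m = a * fc h m := by
  rw [fc, fc]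
  have : (∫ θ in Ic, a * h θ * eC (-m) θ) = a * ∫ θ in Ic, h θ * eC (-m) θ := by
    rw [← MeasureTheory.integral_const_mul]
    refine setIntegral_congr_fun measurableSet_Icc fun θ _ => ?_
    ring
  rw [this]
  ring

lemma Fej_add {h g : ℝ → ℂ} (hh : IntegrableOn h Ic) (hg : IntegrableOn g Ic) (n : ℕ)
    (θ : ℝ) : Fej n (fun t => h t + g t) θ = Fej n h θ + Fej n g θ := by
  simp_rw [Fej, fc_add hh hg]
  rw [← mul_add, ← Finset.sum_add_distrib]
  congr 1
  refine Finset.sum_congr rfl fun j _ => ?_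
  rw [← Finset.sum_add_distrib]
  exact Finset.sum_congr rfl fun k _ => by ring

lemma Fej_sub {h g : ℝ → ℂ} (hh : IntegrableOn h Ic) (hg : IntegrableOn g Ic) (n : ℕ)
    (θ : ℝ) : Fej n (fun t => h t - g t) θ = Fej n h θ - Fej n g θ := by
  simp_rw [Fej, fc_sub hh hg]
  rw [← mul_sub, ← Finset.sum_sub_distrib]
  congr 1
  refine Finset.sum_congr rfl fun j _ => ?_
  rw [← Finset.sum_sub_distrib]
  exact Finset.sum_congr rfl fun k _ => by ring

lemma Fej_smul (a : ℂ) (h : ℝ → ℂ) (n : ℕ) (θ : ℝ) :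
    Fej n (fun t => a * h t) θ = a * Fej n h θ := by
  rw [Fej, Fej]
  have e1 : ∀ j k : Fin (n+1), fc (fun t => a * h t) ((j:ℤ)-(k:ℤ)) * eC ((j:ℤ)-(k:ℤ)) θ
      = a * (fc h ((j:ℤ)-(k:ℤ)) * eC ((j:ℤ)-(k:ℤ)) θ) := fun j k => by
    rw [fc_smul]; ring
  rw [Finset.sum_congr rfl fun j _ => Finset.sum_congr rfl fun k _ => e1 j k]
  rw [Finset.sum_congr rfl fun (j : Fin (n+1)) _ =>
    (Finset.mul_sum Finset.univ (fun k : Fin (n+1) =>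
      fc h ((j:ℤ)-(k:ℤ)) * eC ((j:ℤ)-(k:ℤ)) θ) a).symm, ← Finset.mul_sum]
  ring
lemma Fej_zero (n : ℕ) (θ : ℝ) : Fej n (fun _ => (0:ℂ)) θ = 0 := by
  simp [Fej, fc]

instance : Fact (0 < 2*Real.pi) := ⟨by positivity⟩

lemma span_tendsto (p : C(AddCircle (2*Real.pi), ℂ))
    (hp : p ∈ Submodule.span ℂ (Set.range (@fourier (2*Real.pi)))) :
    IntegrableOn (fun θ : ℝ => p (θ : AddCircle (2*Real.pi))) Ic ∧
      Filter.Tendsto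
        (fun n : ℕ => ∫ θ in Ic,
          ‖Fej n (fun s : ℝ => p (s : AddCircle (2*Real.pi))) θ - p (θ : AddCircle (2*Real.pi))‖)
        atTop (nhds 0) := by
  induction hp using Submodule.span_induction with
  | mem x hx =>
      obtain ⟨m, rfl⟩ := hx
      have hfun : (fun θ : ℝ => (fourier m : C(AddCircle (2*Real.pi), ℂ))
          (θ : AddCircle (2*Real.pi))) = eC m := by
        funext θ
        rw [fourier_coe_apply, eC]
        congr 1
        have hpi : (Real.pi : ℂ) ≠ 0 := by
          simp [Complex.ext_iff, Real.pi_ne_zero]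
        field_simp
        push_cast; ring
      refine ⟨by rw [hfun]; exact eC_integrableOn m, ?_⟩
      have hconv : (fun n : ℕ => ∫ θ in Ic,
          ‖Fej n (fun s : ℝ => (fourier m : C(AddCircle (2*Real.pi), ℂ))
            (s : AddCircle (2*Real.pi))) θ
            - (fourier m : C(AddCircle (2*Real.pi), ℂ)) (θ : AddCircle (2*Real.pi))‖)
          = fun n : ℕ => ∫ θ in Ic, ‖Fej n (eC m) θ - eC m θ‖ := by
        funext n
        refine setIntegral_congr_fun measurableSet_Icc fun θ _ => ?_
        rw [hfun, congrFun hfun θ]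
      rw [hconv]
      exact Fej_eC_tendsto m
  | zero =>
      have hfun : (fun θ : ℝ => (0 : C(AddCircle (2*Real.pi), ℂ)) (θ : AddCircle (2*Real.pi)))
          = (fun _ : ℝ => (0:ℂ)) := funext fun θ => rfl
      refine ⟨by rw [hfun]; exact integrable_zero _ _ _, ?_⟩
      have hconv : (fun n : ℕ => ∫ θ in Ic,
          ‖Fej n (fun s : ℝ => (0 : C(AddCircle (2*Real.pi), ℂ)) (s : AddCircle (2*Real.pi))) θ
            - (0 : C(AddCircle (2*Real.pi), ℂ)) (θ : AddCircle (2*Real.pi))‖)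
          = fun _ : ℕ => (0:ℝ) := by
        funext n
        have hpt : ∀ θ : ℝ,
            ‖Fej n (fun s : ℝ => (0 : C(AddCircle (2*Real.pi), ℂ))
              (s : AddCircle (2*Real.pi))) θ
              - (0 : C(AddCircle (2*Real.pi), ℂ)) (θ : AddCircle (2*Real.pi))‖ = 0 := by
          intro θ
          rw [hfun, Fej_zero]
          simp
        simp_rw [hpt]
        exact integral_zero _ _
      rw [hconv]
      exact tendsto_const_nhds
  | add x y hx hy ihx ihy =>
      obtain ⟨hxi, hxt⟩ := ihx
      obtain ⟨hyi, hyt⟩ := ihy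
      have hfun : (fun θ : ℝ => (x + y) (θ : AddCircle (2*Real.pi)))
          = fun θ : ℝ => x (θ : AddCircle (2*Real.pi)) + y (θ : AddCircle (2*Real.pi)) :=
        funext fun θ => rfl
      constructor
      · rw [hfun]; exact hxi.add hyi
      · have hb : ∀ n : ℕ, (∫ θ in Ic,
            ‖Fej n (fun s : ℝ => (x + y) (s : AddCircle (2*Real.pi))) θ
              - (x + y) (θ : AddCircle (2*Real.pi))‖)
            ≤ (∫ θ in Ic, ‖Fej n (fun s : ℝ => x (s : AddCircle (2*Real.pi))) θ
                - x (θ : AddCircle (2*Real.pi))‖)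
              + ∫ θ in Ic, ‖Fej n (fun s : ℝ => y (s : AddCircle (2*Real.pi))) θ
                - y (θ : AddCircle (2*Real.pi))‖ := by
          intro n
          have i1 : IntegrableOn (fun θ : ℝ =>
              ‖Fej n (fun s : ℝ => x (s : AddCircle (2*Real.pi))) θ
                - x (θ : AddCircle (2*Real.pi))‖) Ic :=
            ((((Fej_continuous n _).continuousOn.integrableOn_compact isCompact_Icc).sub
              hxi).norm)
          have i2 : IntegrableOn (fun θ : ℝ =>
              ‖Fej n (fun s : ℝ => y (s : AddCircle (2*Real.pi))) θ
                - y (θ : AddCircle (2*Real.pi))‖) Ic :=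
            ((((Fej_continuous n _).continuousOn.integrableOn_compact isCompact_Icc).sub
              hyi).norm)
          have iL : IntegrableOn (fun θ : ℝ =>
              ‖Fej n (fun s : ℝ => (x + y) (s : AddCircle (2*Real.pi))) θ
                - (x + y) (θ : AddCircle (2*Real.pi))‖) Ic :=
            ((((Fej_continuous n _).continuousOn.integrableOn_compact isCompact_Icc).sub
              (by rw [hfun]; exact hxi.add hyi)).norm)
          rw [← integral_add i1 i2]
          refine integral_mono iL (i1.add i2) fun θ => ?_
          have hF : Fej n (fun s : ℝ => (x + y) (s : AddCircle (2*Real.pi))) θ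
              = Fej n (fun s : ℝ => x (s : AddCircle (2*Real.pi))) θ
                + Fej n (fun s : ℝ => y (s : AddCircle (2*Real.pi))) θ :=
            Fej_add hxi hyi n θ
          rw [hF, show (x + y) (θ : AddCircle (2*Real.pi))
              = x (θ : AddCircle (2*Real.pi)) + y (θ : AddCircle (2*Real.pi)) from rfl,
            add_sub_add_comm]
          exact norm_add_le _ _
        refine squeeze_zero (fun n => integral_nonneg fun θ => norm_nonneg _) hb ?_
        simpa using hxt.add hyt
  | smul a x hx ihx =>
      obtain ⟨hxi, hxt⟩ := ihx
      constructor
      · have hfun : (fun θ : ℝ => (a • x) (θ : AddCircle (2*Real.pi)))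
            = fun θ : ℝ => a * x (θ : AddCircle (2*Real.pi)) := funext fun θ => rfl
        rw [hfun]
        exact hxi.const_mul a
      · have hval : ∀ n : ℕ, (∫ θ in Ic,
            ‖Fej n (fun s : ℝ => (a • x) (s : AddCircle (2*Real.pi))) θ
              - (a • x) (θ : AddCircle (2*Real.pi))‖)
            = ‖a‖ * ∫ θ in Ic, ‖Fej n (fun s : ℝ => x (s : AddCircle (2*Real.pi))) θ
                - x (θ : AddCircle (2*Real.pi))‖ := by
          intro n
          rw [← MeasureTheory.integral_const_mul]
          refine setIntegral_congr_fun measurableSet_Icc fun θ _ => ?_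
          rw [show Fej n (fun s : ℝ => (a • x) (s : AddCircle (2*Real.pi))) θ
              = a * Fej n (fun s : ℝ => x (s : AddCircle (2*Real.pi))) θ
              from Fej_smul a _ n θ,
            show (a • x) (θ : AddCircle (2*Real.pi))
              = a * x (θ : AddCircle (2*Real.pi)) from rfl,
            ← mul_sub, norm_mul]
        simp_rw [hval]
        simpa using hxt.const_mul ‖a‖
lemma dense_trig {g : ℝ → ℂ} (hg : IntegrableOn g Ic) {ε : ℝ} (hε : 0 < ε) :
    ∃ P : ℝ → ℂ, IntegrableOn P Ic ∧ (∫ θ in Ic, ‖g θ - P θ‖) < ε ∧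
      Filter.Tendsto (fun n : ℕ => ∫ θ in Ic, ‖Fej n P θ - P θ‖) atTop (nhds 0) := by
  have hπ : (0:ℝ) < Real.pi := Real.pi_pos
  -- Step a : continuous compactly supported approximation
  set G : ℝ → ℂ := Ic.indicator g with hG_def
  have hGint : Integrable G volume := (integrable_indicator_iff measurableSet_Icc).2 hg
  obtain ⟨φ, hφsupp, hφapprox, hφcont, hφint⟩ :=
    hGint.exists_hasCompactSupport_integral_sub_le (show (0:ℝ) < ε/4 by linarith)
  have hstep1 : (∫ θ in Ic, ‖g θ - φ θ‖) ≤ ε/4 := by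
    have hle : (∫ θ in Ic, ‖G θ - φ θ‖) ≤ ∫ θ, ‖G θ - φ θ‖ :=
      setIntegral_le_integral ((hGint.sub hφint).norm)
        (Filter.Eventually.of_forall fun θ => norm_nonneg _)
    have heq : (∫ θ in Ic, ‖g θ - φ θ‖) = ∫ θ in Ic, ‖G θ - φ θ‖ :=
      setIntegral_congr_fun measurableSet_Icc fun θ hθ => by
        rw [hG_def, Set.indicator_of_mem hθ]
    rw [heq]
    exact le_trans hle hφapprox
  -- Step b : bound for φ
  obtain ⟨Cb, hCb⟩ := hφcont.bounded_above_of_compact_support hφsupp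
  have hCb0 : (0:ℝ) ≤ Cb := le_trans (norm_nonneg _) (hCb 0)
  -- Step c : cutoff
  set δ : ℝ := min (ε/(8*(Cb+1))) (Real.pi/2) with hδ_def
  have hδpos : 0 < δ := lt_min (by positivity) (by positivity)
  have hδε : δ ≤ ε/(8*(Cb+1)) := min_le_left _ _
  have hδπ : δ ≤ Real.pi/2 := min_le_right _ _
  set χ : ℝ → ℝ := fun x => min 1 (max ((Real.pi - |x|)/δ) 0) with hχ_def
  have hχcont : Continuous χ :=
    continuous_const.min (((continuous_const.sub _root_.continuous_abs).div_const δ).max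
      continuous_const)
  have hχ0 : ∀ x, 0 ≤ χ x := fun x => le_min zero_le_one (le_max_right _ _)
  have hχle1 : ∀ x, χ x ≤ 1 := fun x => min_le_left _ _
  have hχpi : χ Real.pi = 0 := by
    rw [hχ_def]
    simp only [abs_of_pos hπ, sub_self, zero_div]
    simp
  have hχnegpi : χ (-Real.pi) = 0 := by
    rw [hχ_def]
    simp only [abs_neg, abs_of_pos hπ, sub_self, zero_div]
    simp
  have hχ1 : ∀ x, |x| ≤ Real.pi - δ → χ x = 1 := by
    intro x hx
    rw [hχ_def]
    have h1 : (1:ℝ) ≤ (Real.pi - |x|)/δ := by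
      rw [le_div_iff₀ hδpos]
      linarith
    exact min_eq_left (le_trans h1 (le_max_left _ _))
  set ψ : ℝ → ℂ := fun x => (χ x : ℂ) * φ x with hψ_def
  have hψcont : Continuous ψ := (Complex.continuous_ofReal.comp hχcont).mul hφcont
  -- Step d : ∫_Ic ‖φ - ψ‖ ≤ ε/4
  set S : Set ℝ := Icc (-Real.pi) (-(Real.pi - δ)) ∪ Icc (Real.pi - δ) Real.pi with hS_def
  have hSmeas : MeasurableSet S := measurableSet_Icc.union measurableSet_Icc
  have hstep2 : (∫ θ in Ic, ‖φ θ - ψ θ‖) ≤ ε/4 := by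
    have hpointwise : ∀ θ ∈ Ic, ‖φ θ - ψ θ‖ ≤ S.indicator (fun _ => Cb) θ := by
      intro θ hθ
      by_cases hcase : |θ| ≤ Real.pi - δ
      · have : ψ θ = φ θ := by
          rw [hψ_def]
          simp only [hχ1 θ hcase]
          simp
        rw [this, sub_self, norm_zero]
        exact Set.indicator_nonneg (fun _ _ => hCb0) θ
      · push_neg at hcase
        have hθS : θ ∈ S := by
          rw [hS_def]
          rcases le_or_gt 0 θ with h0 | h0
          · right
            rw [_root_.abs_of_nonneg h0] at hcase
            exact ⟨by linarith, hθ.2⟩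
          · left
            rw [_root_.abs_of_neg h0] at hcase
            exact ⟨hθ.1, by linarith⟩
        rw [Set.indicator_of_mem hθS]
        have : φ θ - ψ θ = ((1 - χ θ : ℝ) : ℂ) * φ θ := by
          rw [hψ_def]
          push_cast
          ring
        rw [this, norm_mul, Complex.norm_real, Real.norm_eq_abs]
        have h1 : |1 - χ θ| ≤ 1 := by
          rw [abs_le]
          constructor <;> [linarith [hχle1 θ]; linarith [hχ0 θ]]
        calc |1 - χ θ| * ‖φ θ‖ ≤ 1 * Cb :=
              mul_le_mul h1 (hCb θ) (norm_nonneg _) zero_le_one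
          _ = Cb := one_mul _
    have hint1 : IntegrableOn (fun θ => ‖φ θ - ψ θ‖) Ic :=
      ((hφcont.sub hψcont).norm.continuousOn).integrableOn_compact isCompact_Icc
    have hint2 : IntegrableOn (S.indicator fun _ => Cb) Ic :=
      (integrable_const Cb).indicator hSmeas
    have h1 := setIntegral_mono_on hint1 hint2 measurableSet_Icc hpointwise
    have h2 : (∫ θ in Ic, S.indicator (fun _ => Cb) θ) ≤ 2*δ*Cb := by
      rw [MeasureTheory.integral_indicator hSmeas, setIntegral_const, smul_eq_mul]
      have hmeas : (volume.restrict Ic) S ≤ ENNReal.ofReal δ + ENNReal.ofReal δ := by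
        rw [Measure.restrict_apply hSmeas]
        refine le_trans (measure_mono Set.inter_subset_left) ?_
        rw [hS_def]
        refine le_trans (measure_union_le _ _) ?_
        rw [Real.volume_Icc, Real.volume_Icc]
        have e1 : -(Real.pi - δ) - (-Real.pi) = δ := by ring
        have e2 : Real.pi - (Real.pi - δ) = δ := by ring
        rw [e1, e2]
      have htoReal : ((volume.restrict Ic) S).toReal ≤ 2*δ := by
        have hne : (ENNReal.ofReal δ + ENNReal.ofReal δ) ≠ ⊤ := by
          simp [ENNReal.ofReal_ne_top]
        refine le_trans (ENNReal.toReal_mono hne hmeas) ?_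
        rw [ENNReal.toReal_add ENNReal.ofReal_ne_top ENNReal.ofReal_ne_top,
          ENNReal.toReal_ofReal hδpos.le]
        linarith
      exact mul_le_mul_of_nonneg_right htoReal hCb0
    have h3 : 2*δ*Cb ≤ ε/4 := by
      have hd : δ * Cb ≤ (ε/(8*(Cb+1))) * Cb := mul_le_mul_of_nonneg_right hδε hCb0
      have he : (ε/(8*(Cb+1))) * Cb ≤ ε/8 := by
        rw [div_mul_eq_mul_div, div_le_div_iff₀ (by positivity) (by norm_num)]
        nlinarith
      nlinarith
    linarith
  -- Step e : descend to the circle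
  have hψper : ψ (-Real.pi) = ψ (-Real.pi + 2*Real.pi) := by
    rw [show -Real.pi + 2*Real.pi = Real.pi by ring]
    rw [hψ_def]
    simp only [hχpi, hχnegpi]
    simp
  have hΨcont : Continuous (AddCircle.liftIco (2*Real.pi) (-Real.pi) ψ) := by
    apply AddCircle.liftIco_continuous hψper
    rw [show -Real.pi + 2*Real.pi = Real.pi by ring]
    exact hψcont.continuousOn
  set Ψ : C(AddCircle (2*Real.pi), ℂ) := ⟨AddCircle.liftIco (2*Real.pi) (-Real.pi) ψ, hΨcont⟩
    with hΨ_def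
  -- Step f : Stone-Weierstrass
  have hmem : Ψ ∈ closure ((Submodule.span ℂ (Set.range (@fourier (2*Real.pi)))) :
      Set C(AddCircle (2*Real.pi), ℂ)) := by
    rw [← Submodule.topologicalClosure_coe, span_fourier_closure_eq_top]
    trivial
  obtain ⟨p, hp_mem, hp_dist⟩ := Metric.mem_closure_iff.1 hmem (ε/(8*Real.pi)) (by positivity)
  obtain ⟨hPint, hPtend⟩ := span_tendsto p hp_mem
  refine ⟨fun θ : ℝ => p (θ : AddCircle (2*Real.pi)), hPint, ?_, hPtend⟩
  -- Step g : ∫_Ic ‖ψ - P‖ ≤ ε/4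
  have hstep3 : (∫ θ in Ic, ‖ψ θ - p (θ : AddCircle (2*Real.pi))‖) ≤ ε/4 := by
    rw [show (Ic : Set ℝ) = Icc (-Real.pi) Real.pi from rfl, integral_Icc_eq_integral_Ico]
    have hintL : IntegrableOn (fun θ => ‖ψ θ - p (θ : AddCircle (2*Real.pi))‖)
        (Ico (-Real.pi) Real.pi) := by
      refine IntegrableOn.mono_set ?_ Set.Ico_subset_Icc_self
      exact ((hψcont.sub (p.continuous.comp (AddCircle.continuous_mk' _))).norm.continuousOn
        ).integrableOn_compact isCompact_Icc
    have hintR : IntegrableOn (fun _ : ℝ => dist Ψ p) (Ico (-Real.pi) Real.pi) := by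
      rw [integrableOn_const_iff]
      right
      rw [Real.volume_Ico]
      exact ENNReal.ofReal_lt_top
    have hmono := setIntegral_mono_on hintL hintR measurableSet_Ico ?_
    · refine le_trans hmono ?_
      rw [setIntegral_const, measureReal_def, Real.volume_Ico, smul_eq_mul,
        ENNReal.toReal_ofReal (by linarith)]
      calc (Real.pi - (-Real.pi)) * dist Ψ p ≤ (2*Real.pi) * (ε/(8*Real.pi)) := by
            refine mul_le_mul (by linarith) hp_dist.le dist_nonneg (by linarith)
        _ = ε/4 := by field_simp; ring
    · intro θ hθ
      have hθ' : θ ∈ Ico (-Real.pi) (-Real.pi + 2*Real.pi) := by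
        rw [show -Real.pi + 2*Real.pi = Real.pi by ring]
        exact hθ
      have hΨθ : Ψ (θ : AddCircle (2*Real.pi)) = ψ θ := by
        exact AddCircle.liftIco_coe_apply (f := ψ) hθ'
      rw [← hΨθ, ← dist_eq_norm]
      exact ContinuousMap.dist_apply_le_dist _
  -- triangle inequality
  have hintgφ : IntegrableOn (fun θ => ‖g θ - φ θ‖) Ic := (hg.sub hφint.integrableOn).norm
  have hintφψ : IntegrableOn (fun θ => ‖φ θ - ψ θ‖) Ic :=
    ((hφcont.sub hψcont).norm.continuousOn).integrableOn_compact isCompact_Icc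
  have hintψP : IntegrableOn (fun θ => ‖ψ θ - p (θ : AddCircle (2*Real.pi))‖) Ic :=
    ((hψcont.sub (p.continuous.comp (AddCircle.continuous_mk' _))).norm.continuousOn
      ).integrableOn_compact isCompact_Icc
  have hintL : IntegrableOn (fun θ => ‖g θ - p (θ : AddCircle (2*Real.pi))‖) Ic :=
    (hg.sub hPint).norm
  have htri : (∫ θ in Ic, ‖g θ - p (θ : AddCircle (2*Real.pi))‖)
      ≤ (∫ θ in Ic, ‖g θ - φ θ‖) + ((∫ θ in Ic, ‖φ θ - ψ θ‖)
        + ∫ θ in Ic, ‖ψ θ - p (θ : AddCircle (2*Real.pi))‖) := by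
    have hsum : IntegrableOn
        (fun θ => ‖φ θ - ψ θ‖ + ‖ψ θ - p (θ : AddCircle (2*Real.pi))‖) Ic :=
      hintφψ.add hintψP
    have hfull : IntegrableOn (fun θ => ‖g θ - φ θ‖
        + (‖φ θ - ψ θ‖ + ‖ψ θ - p (θ : AddCircle (2*Real.pi))‖)) Ic := hintgφ.add hsum
    rw [← integral_add hintφψ hintψP, ← integral_add hintgφ hsum]
    refine integral_mono hintL hfull fun θ => ?_
    calc ‖g θ - p (θ : AddCircle (2*Real.pi))‖
        = dist (g θ) (p (θ : AddCircle (2*Real.pi))) := (dist_eq_norm _ _).symm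
      _ ≤ dist (g θ) (φ θ) + dist (φ θ) (ψ θ)
          + dist (ψ θ) (p (θ : AddCircle (2*Real.pi))) := dist_triangle4 _ _ _ _
      _ = ‖g θ - φ θ‖ + (‖φ θ - ψ θ‖ + ‖ψ θ - p (θ : AddCircle (2*Real.pi))‖) := by
          rw [dist_eq_norm, dist_eq_norm, dist_eq_norm]; ring
  calc (∫ θ in Ic, ‖g θ - p (θ : AddCircle (2*Real.pi))‖)
      ≤ ε/4 + (ε/4 + ε/4) := le_trans htri (by gcongr)
    _ < ε := by linarith
lemma Fej_L1_tendsto {h : ℝ → ℂ} (hh : IntegrableOn h Ic) :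
    Filter.Tendsto (fun n : ℕ => ∫ θ in Ic, ‖Fej n h θ - h θ‖) atTop (nhds 0) := by
  rw [Metric.tendsto_atTop]
  intro ε hε
  obtain ⟨P, hPint, hPclose, hPtend⟩ := dense_trig hh (show (0:ℝ) < ε/3 by linarith)
  rw [Metric.tendsto_atTop] at hPtend
  obtain ⟨N, hN⟩ := hPtend (ε/3) (by linarith)
  refine ⟨N, fun n hn => ?_⟩
  have icont : ∀ (u : ℝ → ℂ), IntegrableOn u Ic →
      IntegrableOn (fun θ => ‖Fej n u θ - u θ‖) Ic := fun u hu =>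
    (((Fej_continuous n u).continuousOn.integrableOn_compact isCompact_Icc).sub hu).norm
  have hhP : IntegrableOn (fun t => h t - P t) Ic := hh.sub hPint
  have i2 : IntegrableOn (fun θ => ‖Fej n (fun t => h t - P t) θ‖) Ic :=
    (((Fej_continuous n _).continuousOn.integrableOn_compact isCompact_Icc)).norm
  have i3 : IntegrableOn (fun θ => ‖Fej n P θ - P θ‖) Ic := icont P hPint
  have i4 : IntegrableOn (fun θ => ‖P θ - h θ‖) Ic := (hPint.sub hh).norm
  have i34 : IntegrableOn (fun θ => ‖Fej n P θ - P θ‖ + ‖P θ - h θ‖) Ic := i3.add i4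
  have step1 : (∫ θ in Ic, ‖Fej n h θ - h θ‖) ≤ ∫ θ in Ic,
      (‖Fej n (fun t => h t - P t) θ‖ + (‖Fej n P θ - P θ‖ + ‖P θ - h θ‖)) := by
    refine integral_mono (icont h hh) (i2.add i34) fun θ => ?_
    have hdecomp : Fej n h θ - h θ
        = Fej n (fun t => h t - P t) θ + ((Fej n P θ - P θ) + (P θ - h θ)) := by
      rw [Fej_sub hh hPint]
      ring
    rw [hdecomp]
    refine le_trans (norm_add_le _ _) ?_
    exact add_le_add le_rfl (norm_add_le _ _)
  rw [integral_add i2 i34, integral_add i3 i4] at step1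
  have step2 : (∫ θ in Ic, ‖Fej n (fun t => h t - P t) θ‖) ≤ ∫ θ in Ic, ‖h θ - P θ‖ :=
    Fej_contraction hhP n
  have step3 : (∫ θ in Ic, ‖P θ - h θ‖) = ∫ θ in Ic, ‖h θ - P θ‖ :=
    setIntegral_congr_fun measurableSet_Icc fun θ _ => norm_sub_rev _ _
  have hFP : (∫ θ in Ic, ‖Fej n P θ - P θ‖) < ε/3 := by
    have h1 := hN n hn
    rw [Real.dist_eq, sub_zero] at h1
    exact lt_of_le_of_lt (le_abs_self _) h1
  rw [Real.dist_eq, sub_zero]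
  have hnonneg : (0:ℝ) ≤ ∫ θ in Ic, ‖Fej n h θ - h θ‖ :=
    integral_nonneg fun θ => norm_nonneg _
  rw [_root_.abs_of_nonneg hnonneg]
  rw [step3] at step1
  linarith

lemma Phi_tendsto {f fhat : ℝ → ℝ} (hf : IntegrableOn f Ic) (hfhat : IntegrableOn fhat Ic) :
    Filter.Tendsto (fun n : ℕ => (1/(2*Real.pi)) *
        ∫ θ in Ic, |(Fej n (fun t => ((f t - fhat t : ℝ) : ℂ)) θ).re|)
      atTop (nhds ((1 / (2 * Real.pi)) * ∫ θ in Ic, |f θ - fhat θ|)) := by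
  have hgInt : IntegrableOn (fun t => f t - fhat t) Ic := hf.sub hfhat
  have hgCInt : IntegrableOn (fun t => ((f t - fhat t : ℝ) : ℂ)) Ic := hgInt.ofReal
  rw [tendsto_iff_dist_tendsto_zero]
  refine squeeze_zero (fun n => dist_nonneg)
    (g := fun n : ℕ => (1/(2*Real.pi)) * ∫ θ in Ic,
      ‖Fej n (fun t => ((f t - fhat t : ℝ) : ℂ)) θ - ((f θ - fhat θ : ℝ) : ℂ)‖) ?_ ?_
  · intro n
    rw [Real.dist_eq, ← mul_sub, abs_mul,
      _root_.abs_of_pos (by positivity : (0:ℝ) < 1/(2*Real.pi))]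
    refine mul_le_mul_of_nonneg_left ?_ (by positivity)
    have hAint : IntegrableOn (fun θ => |(Fej n (fun t => ((f t - fhat t : ℝ) : ℂ)) θ).re|) Ic :=
      ((Complex.continuous_re.comp (Fej_continuous n _)).abs.continuousOn
        ).integrableOn_compact isCompact_Icc
    have hBint : IntegrableOn (fun θ => |f θ - fhat θ|) Ic := hgInt.abs
    have hNint : IntegrableOn (fun θ =>
        ‖Fej n (fun t => ((f t - fhat t : ℝ) : ℂ)) θ - ((f θ - fhat θ : ℝ) : ℂ)‖) Ic :=
      (((Fej_continuous n _).continuousOn.integrableOn_compact isCompact_Icc).sub hgCInt).norm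
    rw [← integral_sub hAint hBint]
    refine le_trans (le_of_eq (Real.norm_eq_abs _).symm) ?_
    refine le_trans (norm_integral_le_integral_norm _) ?_
    refine integral_mono ((hAint.sub hBint).norm) hNint fun θ => ?_
    rw [Real.norm_eq_abs]
    refine le_trans (abs_abs_sub_abs_le_abs_sub _ _) ?_
    rw [show (Fej n (fun t => ((f t - fhat t : ℝ) : ℂ)) θ).re - (f θ - fhat θ)
        = (Fej n (fun t => ((f t - fhat t : ℝ) : ℂ)) θ - ((f θ - fhat θ : ℝ) : ℂ)).re by
      rw [Complex.sub_re, Complex.ofReal_re]]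
    exact Complex.abs_re_le_norm _
  · have h0 := (Fej_L1_tendsto hgCInt).const_mul (1/(2*Real.pi))
    rw [mul_zero] at h0
    exact h0

end
end DTP

/-- Proposition 3: the Toeplitz covariance distance between the `n×n` Toeplitz
matrices of Fourier coefficients of `f` and `f̂` converges, as `n → ∞`, to the
`L¹` distance `(1/2π)∫|f - f̂|`. -/
theorem deltaT_fourierToeplitz_tendsto_L1
    (f fhat : ℝ → ℝ)
    (hf : IntegrableOn f (Icc (-Real.pi) Real.pi))
    (hfhat : IntegrableOn fhat (Icc (-Real.pi) Real.pi))
    (hf0 : ∀ θ ∈ Icc (-Real.pi) Real.pi, 0 ≤ f θ)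
    (hfhat0 : ∀ θ ∈ Icc (-Real.pi) Real.pi, 0 ≤ fhat θ) :
    Filter.Tendsto
      (fun n : ℕ => deltaT n (fourierToeplitz (n + 1) f) (fourierToeplitz (n + 1) fhat))
      Filter.atTop
      (nhds ((1 / (2 * Real.pi)) * ∫ θ in Icc (-Real.pi) Real.pi, |f θ - fhat θ|)) := by
  have hΦ := DTP.Phi_tendsto hf hfhat
  refine tendsto_of_tendsto_of_tendsto_of_le_of_le hΦ tendsto_const_nhds ?_ ?_
  · intro n
    simp only [deltaT]
    refine le_csInf ⟨_, DTP.upper_mem hf hfhat n⟩ ?_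
    rintro x ⟨Q, Qhat, hQ, hQT, hQh, hQhT, heq, rfl⟩
    exact DTP.lower_le hf hfhat n hQ hQT hQh hQhT heq
  · intro n
    simp only [deltaT]
    refine csInf_le ⟨(1/(2*Real.pi)) * ∫ θ in DTP.Ic,
        |(DTP.Fej n (fun t => ((f t - fhat t : ℝ) : ℂ)) θ).re|, ?_⟩
      (DTP.upper_mem hf hfhat n)
    rintro x ⟨Q, Qhat, hQ, hQT, hQh, hQhT, heq, rfl⟩
    exact DTP.lower_le hf hfhat n hQ hQT hQh hQhT heq
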